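/- Let K be a standard bilinear Calderón–Zygmund kernel on ℝⁿ with exponent α ∈ (0,1] and constant C_K, let γ = α/(2(2n+α)), and let c₀ > 0. Let I, J, K', Q be cubes in a dyadic grid 𝒟 with ℓ(K') ≤ ℓ(I) = 2ℓ(J), I ∪ J ∪ K' ⊂ Q, and set D := max(d(K',I), d(K',J)). Assume D > ℓ(K')^γ ℓ(J)^{1−γ} and D ≥ c₀ ℓ(K')^γ ℓ(Q)^{1−γ}. Then the integral ∭ K(x,y,z) h_I(y) h_J^0(z) h_{K'}(x) dy dz dx (over x ∈ K', y ∈ I, z ∈ J) converges absolutely and satisfies |∭ K(x,y,z) h_I(y) h_J^0(z) h_{K'}(x) dy dz dx| ≤ C(n,α,c₀) C_K (|I|^{1/2}|J|^{1/2}|K'|^{1/2}/|Q|²) (ℓ(K')/ℓ(Q))^{α/2}, where h_I, h_{K'} are any cancellative Haar functions of I and K' and h_J^0 = |J|^{−1/2}1_J. -/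

import Mathlib

open MeasureTheory Set
open scoped ENNReal NNReal Classical

noncomputable section

namespace Bilinear

/-- Points of `ℝⁿ`, equipped with the `ℓ^∞` (sup) metric. -/
abbrev E (n : ℕ) : Type := Fin n → ℝ

/-- An axis-parallel cube in `ℝⁿ`, described by its lower corner and its side length. -/
structure Cube (n : ℕ) where
  corner : Fin n → ℝ
  side : ℝ
  side_pos : 0 < side

namespace Cube

variable {n : ℕ}

/-- The (half-open) cube as a subset of `ℝⁿ`. -/
def set (Q : Cube n) : Set (E n) :=
  {x | ∀ i, Q.corner i ≤ x i ∧ x i < Q.corner i + Q.side}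

/-- The closed cube as a subset of `ℝⁿ`. -/
def clSet (Q : Cube n) : Set (E n) :=
  {x | ∀ i, Q.corner i ≤ x i ∧ x i ≤ Q.corner i + Q.side}

/-- The volume `|Q| = ℓ(Q)ⁿ` of a cube. -/
def vol (Q : Cube n) : ℝ := Q.side ^ n

/-- The center of a cube. -/
def center (Q : Cube n) : E n := fun i => Q.corner i + Q.side / 2

/-- The concentric dilate `cQ` of a cube (defined for `c ≥ 1`; junk otherwise). -/
def dilate (Q : Cube n) (c : ℝ) : Cube n where
  corner := fun i => Q.corner i + Q.side / 2 - max c 1 * Q.side / 2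
  side := max c 1 * Q.side
  side_pos := mul_pos (lt_of_lt_of_le one_pos (le_max_right c 1)) Q.side_pos

end Cube

/-- The (`ℓ^∞`) distance between two sets of `ℝⁿ`. -/
def setDist {n : ℕ} (s t : Set (E n)) : ℝ := sInf (Set.image2 dist s t)

/-- The (`ℓ^∞`) distance between two cubes. -/
def cubeDist {n : ℕ} (Q R : Cube n) : ℝ := setDist Q.clSet R.clSet

/-- The indicator function `1_Q` of a cube, as a complex-valued function. -/
def indC {n : ℕ} (Q : Cube n) : E n → ℂ := fun x => if x ∈ Q.set then 1 else 0

/-- The average `⟨|f|⟩_Q` of `|f|` over a cube. -/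
def avgAbs {n : ℕ} (Q : Cube n) (f : E n → ℂ) : ℝ := Q.vol⁻¹ * ∫ x in Q.set, ‖f x‖

/-- The average `⟨f⟩_Q` of `f` over a cube. -/
def avg {n : ℕ} (Q : Cube n) (f : E n → ℂ) : ℂ := (Q.vol : ℂ)⁻¹ * ∫ x in Q.set, f x

/-- The `L^p` norm (`p` a real exponent) of `f : ℝⁿ → ℂ`. -/
def lpNorm {n : ℕ} (f : E n → ℂ) (p : ℝ) : ℝ := (eLpNorm f (ENNReal.ofReal p) volume).toReal

/-- `f` is bounded, measurable and compactly supported. -/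
def BddCompactSupp {n : ℕ} (f : E n → ℂ) : Prop :=
  Measurable f ∧ HasCompactSupport f ∧ ∃ M : ℝ, ∀ x, ‖f x‖ ≤ M

/-- The pairing `⟨f, g⟩ = ∫ f g`. -/
def pairing {n : ℕ} (f g : E n → ℂ) : ℂ := ∫ x, f x * g x

/-! ### Random dyadic grids -/

/-- The translation `Σ_{j : 2^{-j} < 2^{-k}} 2^{-j} ω^j` of the grid of scale `2^{-k}`. -/
def gridShift {n : ℕ} (ω : ℤ → Fin n → Bool) (k : ℤ) (i : Fin n) : ℝ :=
  ∑' j : {j : ℤ // k < j}, (2 : ℝ) ^ (-(j.1)) * (if ω j.1 i then 1 else 0)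

/-- The shifted dyadic grid `𝒟_ω = {I + ω : I ∈ 𝒟₀}`. -/
def dyadicGrid {n : ℕ} (ω : ℤ → Fin n → Bool) : Set (Cube n) :=
  {Q | ∃ (k : ℤ) (m : Fin n → ℤ), Q.side = (2 : ℝ) ^ (-k) ∧
    ∀ i, Q.corner i = (m i : ℝ) * (2 : ℝ) ^ (-k) + gridShift ω k i}

/-- A dyadic grid is a translate-type grid `𝒟_ω` of the standard grid. -/
def IsDyadicGrid {n : ℕ} (𝒟 : Set (Cube n)) : Prop := ∃ ω, 𝒟 = dyadicGrid ω

/-- A grid has no quadrants if every strictly increasing chain of cubes exhausts `ℝⁿ`;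
equivalently, every cube of the grid and every point are contained in a common bigger
grid cube. -/
def NoQuadrants {n : ℕ} (𝒟 : Set (Cube n)) : Prop :=
  ∀ Q ∈ 𝒟, ∀ x : E n, ∃ R ∈ 𝒟, Q.set ⊆ R.set ∧ x ∈ R.set

/-- A cube `I` of a grid `𝒟` is good (with parameters `r, γ`) if for every `J ∈ 𝒟` with
`ℓ(J) ≥ 2^r ℓ(I)` one has `d(I, ∂J) > ℓ(I)^γ ℓ(J)^(1-γ)`. -/
def IsGood {n : ℕ} (𝒟 : Set (Cube n)) (r : ℕ) (γ : ℝ) (I : Cube n) : Prop :=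
  ∀ J ∈ 𝒟, (2 : ℝ) ^ r * I.side ≤ J.side →
    I.side ^ γ * J.side ^ (1 - γ) < setDist I.clSet (frontier J.set)

/-! ### Haar functions -/

/-- One-dimensional Haar functions on the interval `[a, a+l)`:
noncancellative (`e = false`) and cancellative (`e = true`). -/
def haar1 (a l : ℝ) (e : Bool) (t : ℝ) : ℝ :=
  if a ≤ t ∧ t < a + l then
    if e then (if t < a + l / 2 then l ^ (-(1 : ℝ) / 2) else -(l ^ (-(1 : ℝ) / 2)))
    else l ^ (-(1 : ℝ) / 2)
  else 0

/-- The Haar function `h_Q^η` of a cube `Q ⊂ ℝⁿ`. It is cancellative iff `η ≠ 0`. -/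
def haar {n : ℕ} (Q : Cube n) (η : Fin n → Bool) : E n → ℝ :=
  fun x => ∏ i, haar1 (Q.corner i) Q.side (η i) (x i)

/-- The pairing `⟨f, h_Q^η⟩`. -/
def haarPairing {n : ℕ} (f : E n → ℂ) (Q : Cube n) (η : Fin n → Bool) : ℂ :=
  ∫ x, f x * (haar Q η x : ℂ)

/-! ### Bilinear Calderón–Zygmund kernels and truncated operators -/


/-- `K` is a (measurable) standard bilinear Calderón–Zygmund kernel on `ℝⁿ` with Hölder
exponent `α` and constant `C`: size bound and Hölder bounds in each of the three
variables, away from the diagonal `Δ = {x = y = z}`. -/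
def CZBounds (n : ℕ) (α : ℝ) (K : E n → E n → E n → ℂ) (C : ℝ) : Prop :=
  Measurable (fun p : E n × E n × E n => K p.1 p.2.1 p.2.2) ∧
  (∀ x y z : E n, ¬(x = y ∧ y = z) →
    ‖K x y z‖ ≤ C / (dist x y + dist x z) ^ (2 * n)) ∧
  (∀ x x' y z : E n, ¬(x = y ∧ y = z) → ¬(x' = y ∧ y = z) →
    dist x x' ≤ max (dist x y) (dist x z) / 2 →
    ‖K x y z - K x' y z‖ ≤ C * dist x x' ^ α / (dist x y + dist x z) ^ (2 * (n : ℝ) + α)) ∧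
  (∀ x y y' z : E n, ¬(x = y ∧ y = z) → ¬(x = y' ∧ y' = z) →
    dist y y' ≤ max (dist x y) (dist x z) / 2 →
    ‖K x y z - K x y' z‖ ≤ C * dist y y' ^ α / (dist x y + dist x z) ^ (2 * (n : ℝ) + α)) ∧
  (∀ x y z z' : E n, ¬(x = y ∧ y = z) → ¬(x = y ∧ y = z') →
    dist z z' ≤ max (dist x y) (dist x z) / 2 →
    ‖K x y z - K x y z'‖ ≤ C * dist z z' ^ α / (dist x y + dist x z) ^ (2 * (n : ℝ) + α))

/-- The truncated bilinear singular integral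
`T_ε(f,g)(x) = ∬_{max(|x-y|,|x-z|) > ε} K(x,y,z) f(y) g(z) dy dz`. -/
def truncT {n : ℕ} (K : E n → E n → E n → ℂ) (ε : ℝ) (f g : E n → ℂ) (x : E n) : ℂ :=
  ∫ y, ∫ z, if ε < max (dist x y) (dist x z) then K x y z * f y * g z else 0

/-- The class `𝒜` of smooth truncation profiles: smooth `φ` with values in `[0,1]`,
vanishing on `[0,1/2]`, equal to `1` on `[1,∞)`, and `‖φ'‖_∞ ≤ 10`. -/
def memA (φ : ℝ → ℝ) : Prop :=
  ContDiff ℝ (⊤ : ℕ∞) φ ∧ (∀ t, φ t ∈ Set.Icc (0 : ℝ) 1) ∧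
    (∀ t ≤ (1 : ℝ) / 2, φ t = 0) ∧ (∀ t, (1 : ℝ) ≤ t → φ t = 1) ∧ ∀ t, |deriv φ t| ≤ 10

/-- The smoothly truncated kernel `K_ε^φ(x,y,z) = K(x,y,z) φ((|x-y|+|x-z|)/ε)`. -/
def smoothK {n : ℕ} (K : E n → E n → E n → ℂ) (φ : ℝ → ℝ) (ε : ℝ) :
    E n → E n → E n → ℂ :=
  fun x y z => K x y z * ((φ ((dist x y + dist x z) / ε) : ℝ) : ℂ)

/-- The smoothly truncated operator `T_ε^φ(f,g)(x) = ∬ K_ε^φ(x,y,z) f(y) g(z) dy dz`. -/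
def smoothT {n : ℕ} (K : E n → E n → E n → ℂ) (φ : ℝ → ℝ) (ε : ℝ) (f g : E n → ℂ)
    (x : E n) : ℂ :=
  ∫ y, ∫ z, smoothK K φ ε x y z * f y * g z

/-- The first adjoint kernel, `K^{1*}(x,y,z) = K(y,x,z)`. -/
def adj1 {n : ℕ} (K : E n → E n → E n → ℂ) : E n → E n → E n → ℂ := fun x y z => K y x z

/-- The second adjoint kernel, `K^{2*}(x,y,z) = K(z,y,x)`. -/
def adj2 {n : ℕ} (K : E n → E n → E n → ℂ) : E n → E n → E n → ℂ := fun x y z => K z y x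

/-- `C` is a weak boundedness constant of the bilinear operator `T`:
`|⟨T(1_I,1_I), 1_I⟩| ≤ C |I|` for all cubes `I ⊂ ℝⁿ`. -/
def WBPBound {n : ℕ} (T : (E n → ℂ) → (E n → ℂ) → E n → ℂ) (C : ℝ) : Prop :=
  ∀ Q : Cube n, ‖∫ x in Q.set, T (indC Q) (indC Q) x‖ ≤ C * Q.vol

/-! ### The `BMO` pairings `⟨T_ε(1,1), φ₀⟩` and testing conditions -/

/-- The pairing `⟨T_ε(1,1), φ₀⟩`, defined (for `φ₀` supported in the cube `R`, with mean
zero, and `c ≥ 3` a dilation factor) as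
`⟨T_ε(1_{cR},1_{cR}), φ₀⟩ + ∭ (K(x,y,z) - K(c_R,y,z)) 1_{(cR×cR)ᶜ}(y,z) φ₀(x) dy dz dx`. -/
def bmoPairing {n : ℕ} (K : E n → E n → E n → ℂ) (ε : ℝ) (φ₀ : E n → ℂ) (R : Cube n)
    (c : ℝ) : ℂ :=
  (∫ x, truncT K ε (indC (R.dilate c)) (indC (R.dilate c)) x * φ₀ x) +
    ∫ x, φ₀ x * ∫ y, ∫ z,
      if y ∈ (R.dilate c).set ∧ z ∈ (R.dilate c).set then 0
      else K x y z - K R.center y z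

/-- The pairing `⟨T_ε^{1*}(1,1), φ₀⟩ = ⟨T_ε(φ₀, 1_{cR}), 1_{cR}⟩ + (correction with K^{1*})`. -/
def bmoPairing1 {n : ℕ} (K : E n → E n → E n → ℂ) (ε : ℝ) (φ₀ : E n → ℂ) (R : Cube n)
    (c : ℝ) : ℂ :=
  (∫ x, truncT K ε φ₀ (indC (R.dilate c)) x * indC (R.dilate c) x) +
    ∫ x, φ₀ x * ∫ y, ∫ z,
      if y ∈ (R.dilate c).set ∧ z ∈ (R.dilate c).set then 0
      else adj1 K x y z - adj1 K R.center y z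

/-- The pairing `⟨T_ε^{2*}(1,1), φ₀⟩ = ⟨T_ε(1_{cR}, φ₀), 1_{cR}⟩ + (correction with K^{2*})`. -/
def bmoPairing2 {n : ℕ} (K : E n → E n → E n → ℂ) (ε : ℝ) (φ₀ : E n → ℂ) (R : Cube n)
    (c : ℝ) : ℂ :=
  (∫ x, truncT K ε (indC (R.dilate c)) φ₀ x * indC (R.dilate c) x) +
    ∫ x, φ₀ x * ∫ y, ∫ z,
      if y ∈ (R.dilate c).set ∧ z ∈ (R.dilate c).set then 0
      else adj2 K x y z - adj2 K R.center y z

/-- `B` is an admissible `BMO` bound for `T_ε(1,1)`: `|⟨T_ε(1,1), φ₀⟩| ≤ B |R|`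
over all admissible testing data. -/
def BMOBound {n : ℕ} (K : E n → E n → E n → ℂ) (ε : ℝ) (B : ℝ) : Prop :=
  ∀ (R : Cube n) (φ₀ : E n → ℂ), Measurable φ₀ → Function.support φ₀ ⊆ R.clSet →
    (∀ x, ‖φ₀ x‖ ≤ 1) → (∫ x, φ₀ x) = 0 →
    ∀ c : ℝ, 3 ≤ c → ε < 2⁻¹ * (c - 1) * R.side →
      ‖bmoPairing K ε φ₀ R c‖ ≤ B * R.vol

/-- `B` is an admissible `BMO` bound for `T_ε^{1*}(1,1)`. -/
def BMOBound1 {n : ℕ} (K : E n → E n → E n → ℂ) (ε : ℝ) (B : ℝ) : Prop :=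
  ∀ (R : Cube n) (φ₀ : E n → ℂ), Measurable φ₀ → Function.support φ₀ ⊆ R.clSet →
    (∀ x, ‖φ₀ x‖ ≤ 1) → (∫ x, φ₀ x) = 0 →
    ∀ c : ℝ, 3 ≤ c → ε < 2⁻¹ * (c - 1) * R.side →
      ‖bmoPairing1 K ε φ₀ R c‖ ≤ B * R.vol

/-- `B` is an admissible `BMO` bound for `T_ε^{2*}(1,1)`. -/
def BMOBound2 {n : ℕ} (K : E n → E n → E n → ℂ) (ε : ℝ) (B : ℝ) : Prop :=
  ∀ (R : Cube n) (φ₀ : E n → ℂ), Measurable φ₀ → Function.support φ₀ ⊆ R.clSet →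
    (∀ x, ‖φ₀ x‖ ≤ 1) → (∫ x, φ₀ x) = 0 →
    ∀ c : ℝ, 3 ≤ c → ε < 2⁻¹ * (c - 1) * R.side →
      ‖bmoPairing2 K ε φ₀ R c‖ ≤ B * R.vol

/-! ### Sparse collections -/

/-- A collection `𝒮` of cubes is `η`-sparse: every `Q ∈ 𝒮` carries a major measurable
subset `E_Q ⊆ Q` with `|E_Q| > η |Q|`, the sets `E_Q` being pairwise disjoint. -/
def IsSparse {n : ℕ} (η : ℝ) (𝒮 : Set (Cube n)) : Prop :=
  ∃ Esel : Cube n → Set (E n),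
    (∀ Q ∈ 𝒮, MeasurableSet (Esel Q) ∧ Esel Q ⊆ Q.set ∧
      ENNReal.ofReal (η * Q.vol) < MeasureTheory.volume (Esel Q)) ∧
    𝒮.Pairwise fun Q R => Disjoint (Esel Q) (Esel R)

/-- The sparse form `Λ_𝒮(f₁,f₂,f₃) = Σ_{Q ∈ 𝒮} |Q| ⟨|f₁|⟩_Q ⟨|f₂|⟩_Q ⟨|f₃|⟩_Q`. -/
def sparseForm {n : ℕ} (𝒮 : Set (Cube n)) (f₁ f₂ f₃ : E n → ℂ) : ℝ :=
  ∑' Q : 𝒮, (Q : Cube n).vol * avgAbs Q f₁ * avgAbs Q f₂ * avgAbs Q f₃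

/-! ### Bilinear dyadic shifts and paraproducts, as trilinear forms -/

/-- A trilinear form on functions on `ℝⁿ`. -/
abbrev TriForm (n : ℕ) : Type := (E n → ℂ) → (E n → ℂ) → (E n → ℂ) → ℂ

/-- The index set of a bilinear dyadic shift of complexity `(i,j,k)` in the grid `𝒟`:
tuples of cubes `I, J, K ⊆ Q` of `𝒟` with `ℓ(I) = 2^{-i} ℓ(Q)`, `ℓ(J) = 2^{-j} ℓ(Q)`,
`ℓ(K) = 2^{-k} ℓ(Q)`, together with Haar signatures, `h_K` being cancellative and at most
one of `h_I, h_J` being noncancellative. -/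
structure ShiftIndex (n : ℕ) (𝒟 : Set (Cube n)) (i j k : ℕ) where
  Q : Cube n
  I : Cube n
  J : Cube n
  K : Cube n
  ηf : Fin n → Bool
  ηg : Fin n → Bool
  ηh : Fin n → Bool
  memQ : Q ∈ 𝒟
  memI : I ∈ 𝒟
  memJ : J ∈ 𝒟
  memK : K ∈ 𝒟
  subI : I.set ⊆ Q.set
  subJ : J.set ⊆ Q.set
  subK : K.set ⊆ Q.set
  sideI : I.side = Q.side / 2 ^ i
  sideJ : J.side = Q.side / 2 ^ j
  sideK : K.side = Q.side / 2 ^ k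
  cancel_h : ηh ≠ fun _ => false
  cancel_fg : ¬(ηf = (fun _ => false) ∧ ηg = (fun _ => false))

/-- `Λ` is (the trilinear form of) a cancellative bilinear dyadic shift of complexity
`(i,j,k)` in the grid `𝒟`: `Λ(f,g,h) = Σ α_{I,J,K,Q} ⟨f, h̃_I⟩ ⟨g, h̃_J⟩ ⟨h, h_K⟩`
with `|α_{I,J,K,Q}| ≤ |I|^{1/2} |J|^{1/2} |K|^{1/2} / |Q|²`. -/
def IsShiftForm {n : ℕ} (𝒟 : Set (Cube n)) (i j k : ℕ) (Λ : TriForm n) : Prop :=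
  ∃ α : ShiftIndex n 𝒟 i j k → ℂ,
    (∀ t, ‖α t‖ ≤ Real.sqrt (t.I.vol * t.J.vol * t.K.vol) / t.Q.vol ^ 2) ∧
    ∀ f g h, Λ f g h =
      ∑' t : ShiftIndex n 𝒟 i j k,
        α t * haarPairing f t.I t.ηf * haarPairing g t.J t.ηg * haarPairing h t.K t.ηh

/-- `Λ` is a cancellative bilinear shift of complexity `(i,i,k)` or `(i,i+1,k)` in `𝒟`,
or an adjoint (`⟨S^{1*}(f,g),h⟩ = ⟨S(h,g),f⟩`, `⟨S^{2*}(f,g),h⟩ = ⟨S(f,h),g⟩`) of such. -/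
def IsExtShiftForm {n : ℕ} (𝒟 : Set (Cube n)) (i k : ℕ) (Λ : TriForm n) : Prop :=
  ∃ Λ₀ : TriForm n, (IsShiftForm 𝒟 i i k Λ₀ ∨ IsShiftForm 𝒟 i (i + 1) k Λ₀) ∧
    ((∀ f g h, Λ f g h = Λ₀ f g h) ∨ (∀ f g h, Λ f g h = Λ₀ h g f) ∨
      (∀ f g h, Λ f g h = Λ₀ f h g))

/-- The index set of a bilinear paraproduct in the grid `𝒟`: cubes `K ∈ 𝒟` with a
cancellative Haar signature. -/
structure ParaIndex (n : ℕ) (𝒟 : Set (Cube n)) where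
  K : Cube n
  η : Fin n → Bool
  mem : K ∈ 𝒟
  cancel : η ≠ fun _ => false

/-- `Λ` is (the trilinear form of) a bilinear paraproduct
`Π_β(f,g) = Σ_K β_K ⟨f⟩_K ⟨g⟩_K h_K` in the grid `𝒟`, with coefficients satisfying the
Carleson normalization `Σ_{K ⊆ K₀} |β_K|² ≤ |K₀|` for all `K₀ ∈ 𝒟`. -/
def IsParaForm {n : ℕ} (𝒟 : Set (Cube n)) (Λ : TriForm n) : Prop :=
  ∃ β : ParaIndex n 𝒟 → ℂ,
    (∀ K₀ ∈ 𝒟, (∑' t : {t : ParaIndex n 𝒟 // t.K.set ⊆ K₀.set},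
        ((‖β t.1‖₊ : ℝ≥0∞) ^ 2)) ≤ ENNReal.ofReal K₀.vol) ∧
    ∀ f g h, Λ f g h =
      ∑' t : ParaIndex n 𝒟, β t * avg t.K f * avg t.K g * haarPairing h t.K t.η


/-!
On the support of the integrand, `x ∈ K'`, `y ∈ I`, `z ∈ J`, so `max(|x - y|, |x - z|) ≥ D`,
and `D > ℓ(K')^γ ℓ(J)^(1-γ) ≥ ℓ(K')/2` because `ℓ(K') ≤ 2ℓ(J)`. As `h_{K'}` has mean zero,
`K(x, y, z)` may be replaced by `K(x, y, z) - K(c_{K'}, y, z)`, which the Hölder estimate bounds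
by `2 C_K ℓ(K')^α / D^(2n+α)`; integrating against `|h_Q| ≤ |Q|^(-1/2)` over `K' × I × J` gives
the factor `(|I| |J| |K'|)^(1/2)`. Finally `D ≥ c₀ ℓ(K')^γ ℓ(Q)^(1-γ)` and `γ (2n + α) = α/2`
turn `ℓ(K')^α / D^(2n+α)` into at most `c₀^-(2n+α) (ℓ(K')/ℓ(Q))^(α/2) / |Q|²`.
-/

namespace Cube

variable {n : ℕ}

lemma set_eq_pi (Q : Cube n) :
    Q.set = univ.pi fun i => Ico (Q.corner i) (Q.corner i + Q.side) := by
  ext x; simp only [Cube.set, mem_ofPred_eq, mem_pi, mem_univ, mem_Ico, true_imp_iff]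

lemma clSet_eq_pi (Q : Cube n) :
    Q.clSet = univ.pi fun i => Icc (Q.corner i) (Q.corner i + Q.side) := by
  ext x; simp only [Cube.clSet, mem_ofPred_eq, mem_pi, mem_univ, mem_Icc, true_imp_iff]

lemma measurableSet_set (Q : Cube n) : MeasurableSet Q.set := by
  rw [set_eq_pi]; exact MeasurableSet.univ_pi fun _ => measurableSet_Ico

lemma vol_pos (Q : Cube n) : 0 < Q.vol := pow_pos Q.side_pos n

lemma volume_set (Q : Cube n) : volume Q.set = ENNReal.ofReal Q.vol := by
  simp only [set_eq_pi, volume_pi_pi, Real.volume_Ico, add_sub_cancel_left, Finset.prod_const,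
    Finset.card_univ, Fintype.card_fin, Cube.vol, ENNReal.ofReal_pow Q.side_pos.le]

lemma set_subset_clSet (Q : Cube n) : Q.set ⊆ Q.clSet :=
  fun _ hx i => ⟨(hx i).1, (hx i).2.le⟩

lemma convex_clSet (Q : Cube n) : Convex ℝ Q.clSet := by
  rw [clSet_eq_pi]; exact convex_pi fun _ _ => convex_Icc _ _

lemma center_mem_clSet (Q : Cube n) : Q.center ∈ Q.clSet := fun i => by
  simp only [Cube.center]; constructor <;> linarith [Q.side_pos]

lemma dist_center_le {Q : Cube n} {x : E n} (hx : x ∈ Q.clSet) :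
    dist x Q.center ≤ Q.side / 2 := by
  refine (dist_pi_le_iff (by linarith [Q.side_pos])).2 fun i => ?_
  rw [Real.dist_eq, abs_le]
  simp only [Cube.center]
  constructor <;> linarith [hx i]

end Cube

lemma cubeDist_le_dist {n : ℕ} {Q R : Cube n} {x y : E n} (hx : x ∈ Q.clSet) (hy : y ∈ R.clSet) :
    cubeDist Q R ≤ dist x y :=
  csInf_le ⟨0, by rintro _ ⟨_, -, _, -, rfl⟩; exact dist_nonneg⟩ (mem_image2_of_mem hx hy)

lemma rpow_neg_half_eq_inv_sqrt {l : ℝ} (hl : 0 ≤ l) : l ^ (-(1 : ℝ) / 2) = (√l)⁻¹ := by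
  rw [neg_div, Real.rpow_neg hl, ← Real.sqrt_eq_rpow]

lemma abs_haar1_le {a l : ℝ} (hl : 0 ≤ l) (e : Bool) (t : ℝ) : |haar1 a l e t| ≤ (√l)⁻¹ := by
  rw [← rpow_neg_half_eq_inv_sqrt hl]
  have h0 : 0 ≤ l ^ (-(1 : ℝ) / 2) := Real.rpow_nonneg hl _
  unfold haar1
  split_ifs <;> simp [abs_of_nonneg h0, h0]

lemma measurable_haar1 (a l : ℝ) (e : Bool) : Measurable (haar1 a l e) := by
  refine Measurable.ite (p := fun t => a ≤ t ∧ t < a + l) measurableSet_Ico ?_ measurable_const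
  cases e
  · exact measurable_const
  · simp only [if_true]; exact Measurable.ite measurableSet_Iio measurable_const measurable_const

lemma integral_haar1_true_eq_zero {a l : ℝ} (hl : 0 < l) : ∫ t, haar1 a l true t = 0 := by
  set c := l ^ (-(1 : ℝ) / 2)
  have hsplit : haar1 a l true = (Ico a (a + l / 2)).indicator (fun _ => c) +
      (Ico (a + l / 2) (a + l)).indicator (fun _ => -c) := by
    ext t
    simp only [haar1, Pi.add_apply, indicator_apply, mem_Ico, if_true]
    split_ifs <;> grind
  have hint : ∀ (b d v : ℝ), Integrable ((Ico b d).indicator fun _ => v) := fun b d v =>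
    (integrable_indicator_iff measurableSet_Ico).2 (integrableOn_const measure_Ico_lt_top.ne)
  rw [hsplit, integral_add' (hint _ _ _) (hint _ _ _), integral_indicator_const _ measurableSet_Ico,
    integral_indicator_const _ measurableSet_Ico]
  simp only [Real.volume_real_Ico, smul_eq_mul]
  rw [max_eq_left (by linarith), max_eq_left (by linarith)]
  ring

section Haar

variable {n : ℕ}

@[fun_prop]
lemma measurable_haar (Q : Cube n) (η : Fin n → Bool) : Measurable (haar Q η) :=
  Finset.measurable_prod _ fun i _ => (measurable_haar1 _ _ _).comp (measurable_pi_apply i)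

lemma abs_haar_le (Q : Cube n) (η : Fin n → Bool) (x : E n) : |haar Q η x| ≤ (√Q.vol)⁻¹ := by
  have hs := Q.side_pos.le
  calc |haar Q η x| = ∏ i, |haar1 (Q.corner i) Q.side (η i) (x i)| := Finset.abs_prod _ _
    _ ≤ ∏ _i : Fin n, (√Q.side)⁻¹ :=
      Finset.prod_le_prod (fun _ _ => abs_nonneg _) fun _ _ => abs_haar1_le hs _ _
    _ = (√Q.vol)⁻¹ := by
      rw [Finset.prod_const, Finset.card_univ, Fintype.card_fin, inv_pow, Cube.vol,
        Real.sqrt_eq_rpow, Real.sqrt_eq_rpow, ← Real.rpow_natCast, ← Real.rpow_natCast,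
        ← Real.rpow_mul hs, ← Real.rpow_mul hs, mul_comm]

lemma haar_eq_zero {Q : Cube n} (η : Fin n → Bool) {x : E n} (hx : x ∉ Q.set) :
    haar Q η x = 0 := by
  simp only [Cube.set, mem_ofPred_eq, not_forall] at hx
  obtain ⟨i, hi⟩ := hx
  exact Finset.prod_eq_zero (Finset.mem_univ i) (if_neg hi)

lemma integral_haar_eq_zero (Q : Cube n) {η : Fin n → Bool} (hη : η ≠ fun _ => false) :
    ∫ x, haar Q η x = 0 := by
  obtain ⟨i, hi⟩ : ∃ i, η i = true := by
    by_contra! h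
    exact hη (funext fun i => by simpa using h i)
  simp only [haar]
  rw [volume_pi, integral_fintype_prod_eq_prod (fun i => haar1 (Q.corner i) Q.side (η i))]
  exact Finset.prod_eq_zero (Finset.mem_univ i)
    (by rw [hi]; exact integral_haar1_true_eq_zero Q.side_pos)

end Haar

section Metric

variable {X : Type*} [PseudoMetricSpace X] {x y z : X}

lemma not_eq_and_eq_of_max_dist_pos (h : 0 < max (dist x y) (dist x z)) : ¬(x = y ∧ y = z) := by
  rintro ⟨rfl, rfl⟩
  simp at h

lemma max_dist_le_dist_add_dist : max (dist x y) (dist x z) ≤ dist x y + dist x z :=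
  max_le (le_add_of_nonneg_right dist_nonneg) (le_add_of_nonneg_left dist_nonneg)

end Metric

namespace CZBounds

variable {n : ℕ} {α C : ℝ} {K : E n → E n → E n → ℂ} {x y z : E n}

lemma const_nonneg (hK : CZBounds n α K C) (h : 0 < max (dist x y) (dist x z)) : 0 ≤ C := by
  have hs : 0 < (dist x y + dist x z) ^ (2 * n) :=
    pow_pos (h.trans_le max_dist_le_dist_add_dist) _
  have := (norm_nonneg _).trans (hK.2.1 x y z (not_eq_and_eq_of_max_dist_pos h))
  simpa [div_mul_cancel₀ _ hs.ne'] using mul_nonneg this hs.le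

lemma norm_le_of_le_max (hK : CZBounds n α K C) {D : ℝ} (hD : 0 < D)
    (h : D ≤ max (dist x y) (dist x z)) : ‖K x y z‖ ≤ C / D ^ (2 * n) :=
  (hK.2.1 x y z (not_eq_and_eq_of_max_dist_pos (hD.trans_le h))).trans <|
    div_le_div_of_nonneg_left (hK.const_nonneg (hD.trans_le h)) (pow_pos hD _)
      (pow_le_pow_left₀ hD.le (h.trans max_dist_le_dist_add_dist) _)

lemma norm_sub_le_of_le_max (hK : CZBounds n α K C) (hα : 0 ≤ α) {x' : E n} {D : ℝ}
    (hD : 0 < D) (h : D ≤ max (dist x y) (dist x z)) (h' : D ≤ max (dist x' y) (dist x' z))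
    (hxx' : dist x x' ≤ D / 2) :
    ‖K x y z - K x' y z‖ ≤ C * dist x x' ^ α / D ^ (2 * (n : ℝ) + α) :=
  (hK.2.2.1 x x' y z (not_eq_and_eq_of_max_dist_pos (hD.trans_le h))
      (not_eq_and_eq_of_max_dist_pos (hD.trans_le h')) (by linarith)).trans <|
    div_le_div_of_nonneg_left
      (mul_nonneg (hK.const_nonneg (hD.trans_le h)) (Real.rpow_nonneg dist_nonneg _))
      (Real.rpow_pos_of_pos hD _)
      (Real.rpow_le_rpow hD.le (h.trans max_dist_le_dist_add_dist) (by positivity))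

/-- As `D` need only exceed `ℓ(R) / 2`, the Hölder condition is applied twice, through the
midpoint of `x` and the center of `R`. -/
lemma norm_sub_center_le (hK : CZBounds n α K C) (hα : 0 ≤ α) {R : Cube n} {D : ℝ}
    (hRD : R.side / 2 ≤ D) (hsep : ∀ x ∈ R.clSet, D ≤ max (dist x y) (dist x z))
    (hx : x ∈ R.clSet) :
    ‖K x y z - K R.center y z‖ ≤ 2 * C * R.side ^ α / D ^ (2 * (n : ℝ) + α) := by
  have hs := R.side_pos
  have hD : 0 < D := by linarith
  have hC := hK.const_nonneg (hD.trans_le (hsep x hx))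
  set w := midpoint ℝ x R.center
  have hw : w ∈ R.clSet := R.convex_clSet.midpoint_mem hx R.center_mem_clSet
  have hxw : dist x w ≤ R.side / 4 := by
    rw [dist_left_midpoint, Real.norm_ofNat]; linarith [Cube.dist_center_le hx]
  have hwc : dist w R.center ≤ R.side / 4 := by
    rw [dist_midpoint_right, Real.norm_ofNat]; linarith [Cube.dist_center_le hx]
  have hstep : ∀ d, 0 ≤ d → d ≤ R.side / 4 →
      C * d ^ α / D ^ (2 * (n : ℝ) + α) ≤ C * R.side ^ α / D ^ (2 * (n : ℝ) + α) :=
    fun d hd hdR => by gcongr; linarith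
  calc ‖K x y z - K R.center y z‖ ≤ ‖K x y z - K w y z‖ + ‖K w y z - K R.center y z‖ :=
        norm_sub_le_norm_sub_add_norm_sub _ _ _
    _ ≤ C * R.side ^ α / D ^ (2 * (n : ℝ) + α) + C * R.side ^ α / D ^ (2 * (n : ℝ) + α) := by
        gcongr
        · exact (hK.norm_sub_le_of_le_max hα hD (hsep x hx) (hsep w hw) (by linarith)).trans
            (hstep _ dist_nonneg hxw)
        · exact (hK.norm_sub_le_of_le_max hα hD (hsep w hw) (hsep _ R.center_mem_clSet)
            (by linarith)).trans (hstep _ dist_nonneg hwc)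
    _ = 2 * C * R.side ^ α / D ^ (2 * (n : ℝ) + α) := by ring

end CZBounds

section HaarCoeff

variable {n : ℕ}

def haarCoeffIntegrand (L : E n → E n → E n → ℂ) (I J R : Cube n) (ηI ηJ ηR : Fin n → Bool)
    (t : E n × E n × E n) : ℂ :=
  L t.1 t.2.1 t.2.2 * ((haar I ηI t.2.1 : ℝ) : ℂ) * ((haar J ηJ t.2.2 : ℝ) : ℂ) *
    ((haar R ηR t.1 : ℝ) : ℂ)

variable {L : E n → E n → E n → ℂ} {I J R : Cube n} {ηI ηJ ηR : Fin n → Bool} {M : ℝ}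

lemma haarCoeffIntegrand_sub (L₁ L₂ : E n → E n → E n → ℂ) :
    haarCoeffIntegrand (fun x y z => L₁ x y z - L₂ x y z) I J R ηI ηJ ηR =
      haarCoeffIntegrand L₁ I J R ηI ηJ ηR - haarCoeffIntegrand L₂ I J R ηI ηJ ηR := by
  funext t; simp only [haarCoeffIntegrand, Pi.sub_apply]; ring

lemma volume_box (R I J : Cube n) :
    volume (R.set ×ˢ I.set ×ˢ J.set) = ENNReal.ofReal (R.vol * (I.vol * J.vol)) := by
  rw [Measure.volume_eq_prod, Measure.prod_prod, Measure.volume_eq_prod, Measure.prod_prod,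
    Cube.volume_set, Cube.volume_set, Cube.volume_set, ← ENNReal.ofReal_mul I.vol_pos.le,
    ← ENNReal.ofReal_mul R.vol_pos.le]

lemma integrable_indicator_box (R I J : Cube n) (c : ℝ) :
    Integrable ((R.set ×ˢ I.set ×ˢ J.set).indicator fun _ => c) :=
  (integrable_indicator_iff (R.measurableSet_set.prod
    (I.measurableSet_set.prod J.measurableSet_set))).2
    (integrableOn_const (by rw [volume_box]; exact ENNReal.ofReal_ne_top))

lemma norm_haarCoeffIntegrand_le
    (hL : ∀ x ∈ R.set, ∀ y ∈ I.set, ∀ z ∈ J.set, ‖L x y z‖ ≤ M) (t : E n × E n × E n) :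
    ‖haarCoeffIntegrand L I J R ηI ηJ ηR t‖ ≤ (R.set ×ˢ I.set ×ˢ J.set).indicator
      (fun _ => M * (√I.vol)⁻¹ * (√J.vol)⁻¹ * (√R.vol)⁻¹) t := by
  obtain ⟨x, y, z⟩ := t
  by_cases ht : (x, y, z) ∈ R.set ×ˢ I.set ×ˢ J.set
  · rw [indicator_of_mem ht]
    obtain ⟨hx, hy, hz⟩ := ht
    simp only [haarCoeffIntegrand, norm_mul, Complex.norm_real, Real.norm_eq_abs]
    have hLxyz := hL x hx y hy z hz
    have hM : 0 ≤ M := (norm_nonneg _).trans hLxyz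
    have := abs_haar_le I ηI y
    have := abs_haar_le J ηJ z
    have := abs_haar_le R ηR x
    bound
  · rw [indicator_of_notMem ht]
    simp only [mem_prod, not_and_or] at ht
    rcases ht with h | h | h <;> simp [haarCoeffIntegrand, haar_eq_zero _ h]

lemma integrable_haarCoeffIntegrand
    (hLm : Measurable fun t : E n × E n × E n => L t.1 t.2.1 t.2.2)
    (hL : ∀ x ∈ R.set, ∀ y ∈ I.set, ∀ z ∈ J.set, ‖L x y z‖ ≤ M) :
    Integrable (haarCoeffIntegrand L I J R ηI ηJ ηR) := by
  refine (integrable_indicator_box R I J _).mono' ?_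
    (ae_of_all _ (norm_haarCoeffIntegrand_le hL))
  unfold haarCoeffIntegrand
  fun_prop

lemma norm_integral_haarCoeffIntegrand_le
    (hL : ∀ x ∈ R.set, ∀ y ∈ I.set, ∀ z ∈ J.set, ‖L x y z‖ ≤ M) :
    ‖∫ t, haarCoeffIntegrand L I J R ηI ηJ ηR t‖ ≤ M * √(I.vol * J.vol * R.vol) := by
  have hbox := R.measurableSet_set.prod (I.measurableSet_set.prod J.measurableSet_set)
  calc ‖∫ t, haarCoeffIntegrand L I J R ηI ηJ ηR t‖
      ≤ ∫ t, (R.set ×ˢ I.set ×ˢ J.set).indicator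
          (fun _ => M * (√I.vol)⁻¹ * (√J.vol)⁻¹ * (√R.vol)⁻¹) t :=
        norm_integral_le_of_norm_le (integrable_indicator_box R I J _)
          (ae_of_all _ (norm_haarCoeffIntegrand_le hL))
    _ = M * √(I.vol * J.vol * R.vol) := by
      rw [integral_indicator_const _ hbox, measureReal_def, volume_box, smul_eq_mul,
        ENNReal.toReal_ofReal (by positivity [R.vol_pos, I.vol_pos, J.vol_pos])]
      calc R.vol * (I.vol * J.vol) * (M * (√I.vol)⁻¹ * (√J.vol)⁻¹ * (√R.vol)⁻¹)
          = M * (I.vol / √I.vol) * (J.vol / √J.vol) * (R.vol / √R.vol) := by ring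
        _ = M * √(I.vol * J.vol * R.vol) := by
          rw [Real.div_sqrt, Real.div_sqrt, Real.div_sqrt,
            Real.sqrt_mul (mul_nonneg I.vol_pos.le J.vol_pos.le), Real.sqrt_mul I.vol_pos.le]
          ring

lemma integral_haarCoeffIntegrand_eq_zero (L₀ : E n → E n → ℂ) (hηR : ηR ≠ fun _ => false) :
    ∫ t, haarCoeffIntegrand (fun _ y z => L₀ y z) I J R ηI ηJ ηR t = 0 := by
  have hR : ∫ x, ((haar R ηR x : ℝ) : ℂ) = 0 := by
    rw [integral_complex_ofReal, integral_haar_eq_zero R hηR, Complex.ofReal_zero]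
  calc ∫ t, haarCoeffIntegrand (fun _ y z => L₀ y z) I J R ηI ηJ ηR t
      = ∫ t : E n × (E n × E n), ((haar R ηR t.1 : ℝ) : ℂ) *
          (L₀ t.2.1 t.2.2 * ((haar I ηI t.2.1 : ℝ) : ℂ) * ((haar J ηJ t.2.2 : ℝ) : ℂ))
            ∂(volume.prod volume) := by
        rw [← Measure.volume_eq_prod]; congr 1; funext t; simp only [haarCoeffIntegrand]; ring
    _ = 0 := by
        rw [integral_prod_mul (fun x => ((haar R ηR x : ℝ) : ℂ))
          (fun p : E n × E n => L₀ p.1 p.2 * ((haar I ηI p.1 : ℝ) : ℂ) * ((haar J ηJ p.2 : ℝ) : ℂ)),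
          hR, zero_mul]

end HaarCoeff

lemma le_rpow_mul_rpow {a s j γ : ℝ} (ha : 0 ≤ a) (has : a ≤ s) (haj : a ≤ j) (hγ₀ : 0 ≤ γ)
    (hγ₁ : γ ≤ 1) : a ≤ s ^ γ * j ^ (1 - γ) :=
  calc a = a ^ γ * a ^ (1 - γ) := by
        rw [← Real.rpow_add' ha (by norm_num), add_sub_cancel, Real.rpow_one]
    _ ≤ s ^ γ * j ^ (1 - γ) :=
        mul_le_mul (Real.rpow_le_rpow ha has hγ₀) (Real.rpow_le_rpow ha haj (by linarith))
          (Real.rpow_nonneg ha _) (Real.rpow_nonneg (ha.trans has) _)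

lemma rpow_div_rpow_le_of_sep {n : ℕ} {α c₀ s q D : ℝ} (hα : 0 < α) (hc₀ : 0 < c₀)
    (hs : 0 < s) (hq : 0 < q)
    (hD : c₀ * (s ^ (α / (2 * (2 * (n : ℝ) + α))) * q ^ (1 - α / (2 * (2 * (n : ℝ) + α)))) ≤ D) :
    s ^ α / D ^ (2 * (n : ℝ) + α) ≤
      (c₀ ^ (2 * (n : ℝ) + α))⁻¹ * (s / q) ^ (α / 2) / (q ^ n) ^ 2 := by
  set β := 2 * (n : ℝ) + α
  have hβpos : 0 < β := by positivity
  have hlow : c₀ ^ β * (s ^ (α / 2) * (q ^ (α / 2) * (q ^ n) ^ 2)) ≤ D ^ β := by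
    calc c₀ ^ β * (s ^ (α / 2) * (q ^ (α / 2) * (q ^ n) ^ 2))
        = (c₀ * (s ^ (α / (2 * β)) * q ^ (1 - α / (2 * β)))) ^ β := by
          rw [Real.mul_rpow hc₀.le (by positivity), Real.mul_rpow (by positivity) (by positivity),
            ← Real.rpow_mul hs.le, ← Real.rpow_mul hq.le, ← pow_mul, ← Real.rpow_natCast,
            ← Real.rpow_add hq]
          congr 3
          · field_simp
          · push_cast; field_simp; ring
      _ ≤ D ^ β := Real.rpow_le_rpow (by positivity) hD hβpos.le
  calc s ^ α / D ^ β ≤ s ^ α / (c₀ ^ β * (s ^ (α / 2) * (q ^ (α / 2) * (q ^ n) ^ 2))) :=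
        div_le_div_of_nonneg_left (by positivity) (by positivity) hlow
    _ = (c₀ ^ β)⁻¹ * (s / q) ^ (α / 2) / (q ^ n) ^ 2 := by
        rw [Real.div_rpow hs.le hq.le, ← add_halves α, Real.rpow_add hs, add_halves]
        field_simp

lemma CZBounds.integrable_and_norm_integral_haarCoeffIntegrand_le {n : ℕ} {α C D : ℝ}
    {K : E n → E n → E n → ℂ} (hK : CZBounds n α K C) (hα : 0 ≤ α) {I J R : Cube n}
    {ηI ηJ ηR : Fin n → Bool} (hηR : ηR ≠ fun _ => false) (hRD : R.side / 2 ≤ D)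
    (hsep : ∀ x ∈ R.clSet, ∀ y ∈ I.clSet, ∀ z ∈ J.clSet, D ≤ max (dist x y) (dist x z)) :
    Integrable (haarCoeffIntegrand K I J R ηI ηJ ηR) ∧
      ‖∫ t, haarCoeffIntegrand K I J R ηI ηJ ηR t‖ ≤
        2 * C * R.side ^ α / D ^ (2 * (n : ℝ) + α) * √(I.vol * J.vol * R.vol) := by
  have hD : 0 < D := by linarith [R.side_pos]
  have hbound : ∀ x ∈ R.clSet, ∀ y ∈ I.set, ∀ z ∈ J.set, ‖K x y z‖ ≤ C / D ^ (2 * n) :=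
    fun x hx y hy z hz => hK.norm_le_of_le_max hD
      (hsep x hx y (I.set_subset_clSet hy) z (J.set_subset_clSet hz))
  have hint : Integrable (haarCoeffIntegrand K I J R ηI ηJ ηR) :=
    integrable_haarCoeffIntegrand hK.1 fun x hx => hbound x (R.set_subset_clSet hx)
  have hint₀ : Integrable (haarCoeffIntegrand (fun _ y z => K R.center y z) I J R ηI ηJ ηR) :=
    integrable_haarCoeffIntegrand (by have := hK.1; fun_prop)
      fun _ _ => hbound _ R.center_mem_clSet
  refine ⟨hint, ?_⟩
  rw [← sub_zero (∫ t, _), ← integral_haarCoeffIntegrand_eq_zero (K R.center) hηR,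
    ← integral_sub' hint hint₀, ← haarCoeffIntegrand_sub]
  exact norm_integral_haarCoeffIntegrand_le fun x hx y hy z hz =>
    hK.norm_sub_center_le hα hRD
      (fun x hx => hsep x hx y (I.set_subset_clSet hy) z (J.set_subset_clSet hz))
      (R.set_subset_clSet hx)

theorem separated_haar_coefficient_bound_general (n : ℕ)
    (α : ℝ) (hα : α ∈ Set.Ioc (0 : ℝ) 1) (c₀ : ℝ) (hc₀ : 0 < c₀) :
    ∃ C : ℝ, 0 < C ∧
      ∀ (K : E n → E n → E n → ℂ) (CK : ℝ), CZBounds n α K CK →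
      ∀ (ω : ℤ → Fin n → Bool) (I J K' Q : Cube n),
        I ∈ dyadicGrid ω → J ∈ dyadicGrid ω → K' ∈ dyadicGrid ω → Q ∈ dyadicGrid ω →
        K'.side ≤ I.side → I.side = 2 * J.side →
        I.set ∪ J.set ∪ K'.set ⊆ Q.set →
        K'.side ^ (α / (2 * (2 * (n : ℝ) + α))) *
            J.side ^ (1 - α / (2 * (2 * (n : ℝ) + α))) <
          max (cubeDist K' I) (cubeDist K' J) →
        c₀ * (K'.side ^ (α / (2 * (2 * (n : ℝ) + α))) *
            Q.side ^ (1 - α / (2 * (2 * (n : ℝ) + α)))) ≤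
          max (cubeDist K' I) (cubeDist K' J) →
      ∀ ηI ηK : Fin n → Bool, ηI ≠ (fun _ => false) → ηK ≠ (fun _ => false) →
        Integrable (fun t : E n × E n × E n =>
          K t.1 t.2.1 t.2.2 * ((haar I ηI t.2.1 : ℝ) : ℂ) *
            ((haar J (fun _ => false) t.2.2 : ℝ) : ℂ) * ((haar K' ηK t.1 : ℝ) : ℂ))
          volume ∧
        ‖∫ t : E n × E n × E n,
            K t.1 t.2.1 t.2.2 * ((haar I ηI t.2.1 : ℝ) : ℂ) *
              ((haar J (fun _ => false) t.2.2 : ℝ) : ℂ) * ((haar K' ηK t.1 : ℝ) : ℂ)‖ ≤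
          C * CK * (Real.sqrt (I.vol * J.vol * K'.vol) / Q.vol ^ 2) *
            (K'.side / Q.side) ^ (α / 2) := by
  obtain ⟨hα₀, -⟩ := hα
  refine ⟨2 * (c₀ ^ (2 * (n : ℝ) + α))⁻¹, by positivity, ?_⟩
  intro K CK hK ω I J K' Q _ _ _ _ hK'I hIJ _ hD₁ hD₂ ηI ηK _ hηK
  set D := max (cubeDist K' I) (cubeDist K' J)
  have hsep : ∀ x ∈ K'.clSet, ∀ y ∈ I.clSet, ∀ z ∈ J.clSet, D ≤ max (dist x y) (dist x z) :=
    fun x hx y hy z hz => max_le_max (cubeDist_le_dist hx hy) (cubeDist_le_dist hx hz)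
  have hK'D : K'.side / 2 ≤ D :=
    (le_rpow_mul_rpow (by linarith [K'.side_pos]) (by linarith [K'.side_pos]) (by linarith)
      (by positivity) (div_le_one_of_le₀ (by linarith) (by positivity))).trans hD₁.le
  have hCK := hK.const_nonneg <| (by linarith [K'.side_pos] : 0 < D).trans_le
    (hsep _ K'.center_mem_clSet _ I.center_mem_clSet _ J.center_mem_clSet)
  obtain ⟨hint, hnorm⟩ := hK.integrable_and_norm_integral_haarCoeffIntegrand_le hα₀.le
    (ηI := ηI) (ηJ := fun _ => false) hηK hK'D hsep
  refine ⟨hint, hnorm.trans ?_⟩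
  calc 2 * CK * K'.side ^ α / D ^ (2 * (n : ℝ) + α) * √(I.vol * J.vol * K'.vol)
      = 2 * CK * √(I.vol * J.vol * K'.vol) * (K'.side ^ α / D ^ (2 * (n : ℝ) + α)) := by ring
    _ ≤ 2 * CK * √(I.vol * J.vol * K'.vol) *
          ((c₀ ^ (2 * (n : ℝ) + α))⁻¹ * (K'.side / Q.side) ^ (α / 2) / (Q.side ^ n) ^ 2) :=
        mul_le_mul_of_nonneg_left (rpow_div_rpow_le_of_sep hα₀ hc₀ K'.side_pos Q.side_pos hD₂)
          (by positivity)
    _ = _ := by unfold Cube.vol; ring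

/-- kernel bound for the separated Haar coefficients: if
`ℓ(K') ≤ ℓ(I) = 2 ℓ(J)`, `I ∪ J ∪ K' ⊆ Q`, and
`D := max(d(K',I), d(K',J))` satisfies `D > ℓ(K')^γ ℓ(J)^{1-γ}` (with
`γ = α/(2(2n+α))`) and `D ≥ c₀ ℓ(K')^γ ℓ(Q)^{1-γ}`, then
`|⟨T(h_I, h_J⁰), h_{K'}⟩| ≤ C(n,α,c₀) C_K (|I|^{1/2}|J|^{1/2}|K'|^{1/2}/|Q|²) (ℓ(K')/ℓ(Q))^{α/2}`,
the triple integral converging absolutely. -/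
theorem separated_haar_coefficient_bound (n : ℕ) (hn : 0 < n)
    (α : ℝ) (hα : α ∈ Set.Ioc (0 : ℝ) 1) (c₀ : ℝ) (hc₀ : 0 < c₀) :
    ∃ C : ℝ, 0 < C ∧
      ∀ (K : E n → E n → E n → ℂ) (CK : ℝ), CZBounds n α K CK →
      ∀ (ω : ℤ → Fin n → Bool) (I J K' Q : Cube n),
        I ∈ dyadicGrid ω → J ∈ dyadicGrid ω → K' ∈ dyadicGrid ω → Q ∈ dyadicGrid ω →
        K'.side ≤ I.side → I.side = 2 * J.side →
        I.set ∪ J.set ∪ K'.set ⊆ Q.set →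
        K'.side ^ (α / (2 * (2 * (n : ℝ) + α))) *
            J.side ^ (1 - α / (2 * (2 * (n : ℝ) + α))) <
          max (cubeDist K' I) (cubeDist K' J) →
        c₀ * (K'.side ^ (α / (2 * (2 * (n : ℝ) + α))) *
            Q.side ^ (1 - α / (2 * (2 * (n : ℝ) + α)))) ≤
          max (cubeDist K' I) (cubeDist K' J) →
      ∀ ηI ηK : Fin n → Bool, ηI ≠ (fun _ => false) → ηK ≠ (fun _ => false) →
        Integrable (fun t : E n × E n × E n =>
          K t.1 t.2.1 t.2.2 * ((haar I ηI t.2.1 : ℝ) : ℂ) *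
            ((haar J (fun _ => false) t.2.2 : ℝ) : ℂ) * ((haar K' ηK t.1 : ℝ) : ℂ))
          volume ∧
        ‖∫ t : E n × E n × E n,
            K t.1 t.2.1 t.2.2 * ((haar I ηI t.2.1 : ℝ) : ℂ) *
              ((haar J (fun _ => false) t.2.2 : ℝ) : ℂ) * ((haar K' ηK t.1 : ℝ) : ℂ)‖ ≤
          C * CK * (Real.sqrt (I.vol * J.vol * K'.vol) / Q.vol ^ 2) *
            (K'.side / Q.side) ^ (α / 2) :=
  separated_haar_coefficient_bound_general n α hα c₀ hc₀

end Bilinear
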